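/- arXiv:1409.8407 — 2 statements merged into one kernel-verified Lean document; each statement's English description precedes it below -/
import Mathlib

section
/- Let f : ℝⁿ → ℝⁿ be Lipschitz with constant L ≥ 0, A : ℝⁿ → ℝⁿ a linear map, x₀ ∈ ℝⁿ, T > 0 and M > 0. Then there exists a constant C > 0 (depending only on f, A, x₀, T, M) such that: for every T₀ ∈ (0,1], every measurable T₀-periodic function p : ℝ → ℝ with |p(t)| ≤ M for all t and mean value p*, every solution x of the switched system on [0,T] and every solution y of the averaged system (with parameter p*) on [0,T], one has ‖x(t) − y(t)‖ ≤ C·T₀ for all t ∈ [0,T]. -/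
/-!
With `G t v = f v + p t • A v`, which is Lipschitz in `v` uniformly in `t`, the error `x - y`
satisfies `(x - y)' = (G t x - G t y) - (p* - p t) • A y`, so by the integral form of Grönwall's
inequality it suffices to bound `∫₀ˢ (p* - p) • A y` by `O(T₀)` uniformly in `s ∈ [0, T]`.
Cut `[0, s]` into whole periods and a remainder shorter than `T₀`. On a whole period `p* - p` has
mean zero, so `A y` may be replaced by its oscillation over the period, which is `O(T₀)` because
`y` is Lipschitz with a constant depending only on `f, A, x₀, T, M` (Grönwall's a priori bound).
This gives `O(T₀²)` per period, hence `O(T₀)` over the at most `T / T₀` periods, and the remainder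
is `O(T₀)` because `A y` is bounded.
-/

open Set MeasureTheory Function Real

theorem mul_gronwallBound_δ0_add (K ε x : ℝ) :
    K * gronwallBound 0 K ε x + ε = ε * exp (K * x) := by
  rcases eq_or_ne K 0 with rfl | hK
  · simp
  · rw [gronwallBound_of_K_ne_0 hK]
    field_simp
    ring

theorem le_mul_exp_of_le_add_mul_integral {φ : ℝ → ℝ} {K ε T : ℝ} (hK : 0 ≤ K)
    (hφ : ContinuousOn φ (Icc 0 T)) (h : ∀ t ∈ Icc 0 T, φ t ≤ ε + K * ∫ u in 0..t, φ u) :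
    ∀ t ∈ Icc 0 T, φ t ≤ ε * exp (K * t) := by
  intro t ht
  have hT : 0 ≤ T := ht.1.trans ht.2
  -- a globally continuous copy of `φ`, so that `s ↦ ∫ u in 0..s, φ' u` is differentiable
  set φ' : ℝ → ℝ := fun s => φ (projIcc 0 T hT s)
  have hφ'_cont : Continuous φ' :=
    hφ.comp_continuous (continuous_subtype_val.comp continuous_projIcc) fun s => Subtype.mem _
  have hφ'_eq : ∀ s ∈ Icc 0 T, φ' s = φ s := fun s hs => by simp [φ', projIcc_of_mem hT hs]
  have hint_eq : ∀ s ∈ Icc 0 T, ∫ u in 0..s, φ' u = ∫ u in 0..s, φ u := fun s hs =>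
    intervalIntegral.integral_congr fun u hu =>
      hφ'_eq u (uIcc_subset_Icc (left_mem_Icc.2 hT) hs hu)
  have hderiv : ∀ s, HasDerivAt (fun s => ∫ u in 0..s, φ' u) (φ' s) s := fun s =>
    (hφ'_cont.integral_hasStrictDerivAt 0 s).hasDerivAt
  have hgron := le_gronwallBound_of_liminf_deriv_right_le (δ := 0) (K := K) (ε := ε)
    (fun s _ => (hderiv s).continuousAt.continuousWithinAt)
    (fun s _ _ hr => (hderiv s).hasDerivWithinAt.liminf_right_slope_le hr)
    (by simp) (fun s hs => by
      rw [hφ'_eq s (Ico_subset_Icc_self hs), hint_eq s (Ico_subset_Icc_self hs), add_comm]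
      exact h s (Ico_subset_Icc_self hs)) t ht
  rw [hint_eq t ht, sub_zero] at hgron
  calc φ t ≤ ε + K * ∫ u in 0..t, φ u := h t ht
    _ ≤ K * gronwallBound 0 K ε t + ε := by linarith [mul_le_mul_of_nonneg_left hgron hK]
    _ = ε * exp (K * t) := mul_gronwallBound_δ0_add K ε t

theorem Measurable.intervalIntegrable_of_abs_le {p : ℝ → ℝ} {M : ℝ} (hp : Measurable p)
    (hpM : ∀ u, |p u| ≤ M) (a b : ℝ) : IntervalIntegrable p volume a b :=
  (intervalIntegrable_const (c := M)).mono_fun hp.aestronglyMeasurable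
    (ae_of_all _ fun u => by simpa using (hpM u).trans (le_abs_self M))

theorem abs_one_div_mul_integral_le {p : ℝ → ℝ} {M T₀ : ℝ} (hT₀ : 0 < T₀)
    (hpM : ∀ u, |p u| ≤ M) : |1 / T₀ * ∫ u in 0..T₀, p u| ≤ M := by
  have hint := intervalIntegral.norm_integral_le_of_norm_le_const (a := 0) (b := T₀) (f := p)
    fun u _ => (Real.norm_eq_abs (p u)).trans_le (hpM u)
  rw [Real.norm_eq_abs, sub_zero, abs_of_pos hT₀] at hint
  rw [abs_mul, abs_of_pos (one_div_pos.2 hT₀)]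
  calc 1 / T₀ * |∫ u in 0..T₀, p u| ≤ 1 / T₀ * (M * T₀) := by gcongr
    _ = M := by field_simp

section

variable {E : Type*} [NormedAddCommGroup E] [NormedSpace ℝ E]

theorem LipschitzWith.norm_add_smul_sub_add_smul_le {f : E → E} {Lf : NNReal}
    (hf : LipschitzWith Lf f) (A : E →L[ℝ] E) {c M : ℝ} (hc : |c| ≤ M) (v w : E) :
    ‖(f v + c • A v) - (f w + c • A w)‖ ≤ (Lf + M * ‖A‖) * ‖v - w‖ := by
  have hM : 0 ≤ M := (abs_nonneg c).trans hc
  calc ‖(f v + c • A v) - (f w + c • A w)‖ = ‖(f v - f w) + c • A (v - w)‖ := by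
        rw [map_sub, smul_sub, add_sub_add_comm]
    _ ≤ ‖f v - f w‖ + |c| * ‖A (v - w)‖ := by
        rw [← Real.norm_eq_abs, ← norm_smul]; exact norm_add_le _ _
    _ ≤ Lf * ‖v - w‖ + M * (‖A‖ * ‖v - w‖) := by
        gcongr
        exacts [hf.norm_sub_le v w, A.le_opNorm _]
    _ = (Lf + M * ‖A‖) * ‖v - w‖ := by ring

theorem LipschitzWith.norm_add_smul_le {f : E → E} {Lf : NNReal} (hf : LipschitzWith Lf f)
    (A : E →L[ℝ] E) {c M : ℝ} (hc : |c| ≤ M) (v : E) :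
    ‖f v + c • A v‖ ≤ (Lf + M * ‖A‖) * ‖v‖ + ‖f 0‖ := by
  have h := hf.norm_add_smul_sub_add_smul_le A hc v 0
  rw [map_zero, smul_zero, add_zero, sub_zero] at h
  linarith [norm_le_norm_add_norm_sub' (f v + c • A v) (f 0)]

theorem norm_le_gronwallBound_of_hasDerivAt {F : E → E} {y : ℝ → E} {K c T : ℝ} (hK : 0 ≤ K)
    (hc : 0 ≤ c) (hF : ∀ v, ‖F v‖ ≤ K * ‖v‖ + c)
    (hy : ∀ t ∈ Icc 0 T, HasDerivAt y (F (y t)) t) :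
    ∀ t ∈ Icc 0 T, ‖y t‖ ≤ gronwallBound ‖y 0‖ K c T := fun t ht =>
  (norm_le_gronwallBound_of_norm_deriv_right_le
    (fun s hs => (hy s hs).continuousAt.continuousWithinAt)
    (fun s hs => (hy s (Ico_subset_Icc_self hs)).hasDerivWithinAt) le_rfl (fun s _ => hF _)
    t ht).trans (by rw [sub_zero]; exact gronwallBound_mono (norm_nonneg _) hc hK ht.2)

theorem lipschitzOnWith_of_hasDerivAt {F : E → E} {y : ℝ → E} {K c T : ℝ} (hK : 0 ≤ K)
    (hc : 0 ≤ c) (hF : ∀ v, ‖F v‖ ≤ K * ‖v‖ + c)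
    (hy : ∀ t ∈ Icc 0 T, HasDerivAt y (F (y t)) t) :
    LipschitzOnWith (K * gronwallBound ‖y 0‖ K c T + c).toNNReal y (Icc 0 T) :=
  (convex_Icc 0 T).lipschitzOnWith_of_nnnorm_hasDerivWithin_le
    (fun s hs => (hy s hs).hasDerivWithinAt) fun s hs => by
      rw [← norm_toNNReal]
      refine Real.toNNReal_le_toNNReal ((hF _).trans ?_)
      gcongr
      exact norm_le_gronwallBound_of_hasDerivAt hK hc hF hy s hs

variable [CompleteSpace E]

theorem norm_sub_le_mul_exp_of_integral_perturbation {G : ℝ → E → E} {r x y : ℝ → E}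
    {K ε T : ℝ} (hK : 0 ≤ K) (hG : ∀ t ∈ Icc 0 T, ∀ v w, ‖G t v - G t w‖ ≤ K * ‖v - w‖)
    (hG_int : ∀ z : ℝ → E, ContinuousOn z (Icc 0 T) →
      IntervalIntegrable (fun t => G t (z t)) volume 0 T)
    (hx : ∀ t ∈ Icc 0 T, HasDerivAt x (G t (x t)) t)
    (hy : ∀ t ∈ Icc 0 T, HasDerivAt y (G t (y t) + r t) t) (h0 : x 0 = y 0)
    (hr : IntervalIntegrable r volume 0 T) (hε : ∀ t ∈ Icc 0 T, ‖∫ u in 0..t, r u‖ ≤ ε) :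
    ∀ t ∈ Icc 0 T, ‖x t - y t‖ ≤ ε * exp (K * t) := by
  have hxc : ContinuousOn x (Icc 0 T) := fun t ht => (hx t ht).continuousAt.continuousWithinAt
  have hyc : ContinuousOn y (Icc 0 T) := fun t ht => (hy t ht).continuousAt.continuousWithinAt
  have hcont : ContinuousOn (fun t => ‖x t - y t‖) (Icc 0 T) := (hxc.sub hyc).norm
  refine le_mul_exp_of_le_add_mul_integral hK hcont fun t ht => ?_
  have hsub : uIcc 0 t ⊆ Icc 0 T := uIcc_subset_Icc (left_mem_Icc.2 (ht.1.trans ht.2)) ht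
  have hsub' : uIcc 0 t ⊆ uIcc 0 T := by rwa [uIcc_of_le (ht.1.trans ht.2)]
  have hD : IntervalIntegrable (fun u => G u (x u) - G u (y u)) volume 0 t :=
    ((hG_int x hxc).sub (hG_int y hyc)).mono_set hsub'
  have hrt : IntervalIntegrable r volume 0 t := hr.mono_set hsub'
  have hftc : x t - y t = (∫ u in 0..t, G u (x u) - G u (y u)) - ∫ u in 0..t, r u := by
    rw [← intervalIntegral.integral_sub hD hrt,
      intervalIntegral.integral_eq_sub_of_hasDerivAt (fun u hu =>
        ((hx u (hsub hu)).sub (hy u (hsub hu))).congr_deriv (by abel)) (hD.sub hrt),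
      Pi.sub_apply, Pi.sub_apply, h0, sub_self, sub_zero]
  have hdrift : ‖∫ u in 0..t, G u (x u) - G u (y u)‖ ≤ ∫ u in 0..t, K * ‖x u - y u‖ :=
    intervalIntegral.norm_integral_le_of_norm_le ht.1
      (ae_of_all _ fun u hu => hG u (hsub (Icc_subset_uIcc (Ioc_subset_Icc_self hu))) _ _)
      ((hcont.mono hsub).intervalIntegrable.const_mul K)
  calc ‖x t - y t‖ ≤ ‖∫ u in 0..t, G u (x u) - G u (y u)‖ + ‖∫ u in 0..t, r u‖ :=
        hftc ▸ norm_sub_le _ _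
    _ ≤ (∫ u in 0..t, K * ‖x u - y u‖) + ε := add_le_add hdrift (hε t ht)
    _ = ε + K * ∫ u in 0..t, ‖x u - y u‖ := by rw [intervalIntegral.integral_const_mul, add_comm]

theorem norm_integral_smul_le_of_integral_eq_zero {q : ℝ → ℝ} {g : ℝ → E} {a b Q : ℝ}
    {Λ : NNReal} (hab : a ≤ b) (hqi : IntervalIntegrable q volume a b)
    (hq : ∫ u in a..b, q u = 0) (hQ : ∀ u, |q u| ≤ Q) (hg : LipschitzOnWith Λ g (Icc a b)) :
    ‖∫ u in a..b, q u • g u‖ ≤ Q * Λ * (b - a) ^ 2 := by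
  have hQ0 : 0 ≤ Q := (abs_nonneg _).trans (hQ a)
  have hcenter : ∫ u in a..b, q u • g u = ∫ u in a..b, q u • (g u - g a) := by
    simp_rw [smul_sub]
    rw [intervalIntegral.integral_sub
      (hqi.smul_continuousOn (by rw [uIcc_of_le hab]; exact hg.continuousOn))
      (hqi.smul_continuousOn continuousOn_const), intervalIntegral.integral_smul_const, hq,
      zero_smul, sub_zero]
  rw [hcenter, sq, ← mul_assoc, ← abs_of_nonneg (sub_nonneg.2 hab)]
  refine intervalIntegral.norm_integral_le_of_norm_le_const fun u hu => ?_
  rw [uIoc_of_le hab] at hu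
  have hu' : u ∈ Icc a b := Ioc_subset_Icc_self hu
  rw [norm_smul, Real.norm_eq_abs, mul_assoc, abs_of_nonneg (sub_nonneg.2 hab)]
  gcongr
  · exact hQ u
  · calc ‖g u - g a‖ ≤ Λ * ‖u - a‖ := hg.norm_sub_le hu' (left_mem_Icc.2 hab)
      _ ≤ Λ * (b - a) := by
        rw [Real.norm_of_nonneg (sub_nonneg.2 hu.1.le)]
        gcongr
        exact hu.2

theorem Function.Periodic.norm_integral_nat_mul_smul_le {q : ℝ → ℝ} {g : ℝ → E} {T₀ Q : ℝ}
    {Λ : NNReal} (hq : Periodic q T₀) (hT₀ : 0 < T₀) (hqi : IntervalIntegrable q volume 0 T₀)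
    (hq0 : ∫ u in 0..T₀, q u = 0) (hQ : ∀ u, |q u| ≤ Q) (N : ℕ)
    (hg : LipschitzOnWith Λ g (Icc 0 (N * T₀))) :
    ‖∫ u in 0..N * T₀, q u • g u‖ ≤ N * (Q * Λ * T₀ ^ 2) := by
  induction N with
  | zero => simp
  | succ N ih =>
    rw [Nat.cast_succ, add_one_mul] at hg ⊢
    have hNT₀ : (N : ℝ) * T₀ ∈ Icc 0 (N * T₀ + T₀) := ⟨by positivity, by linarith⟩
    have hqgi : ∀ a b, uIcc a b ⊆ Icc 0 (N * T₀ + T₀) →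
        IntervalIntegrable (fun u => q u • g u) volume a b := fun a b hab =>
      (hq.intervalIntegrable₀ hT₀.ne' hqi a b).smul_continuousOn (hg.continuousOn.mono hab)
    have hperiod : ‖∫ u in N * T₀..N * T₀ + T₀, q u • g u‖ ≤ Q * Λ * T₀ ^ 2 := by
      simpa using norm_integral_smul_le_of_integral_eq_zero (by linarith)
        (hq.intervalIntegrable₀ hT₀.ne' hqi _ _)
        (by rw [hq.intervalIntegral_add_eq _ 0, zero_add, hq0]) hQ
        (hg.mono (Icc_subset_Icc hNT₀.1 le_rfl))
    rw [← intervalIntegral.integral_add_adjacent_intervals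
      (hqgi _ _ (uIcc_subset_Icc (left_mem_Icc.2 (by positivity)) hNT₀))
      (hqgi _ _ (uIcc_subset_Icc hNT₀ (right_mem_Icc.2 (by positivity))))]
    calc _ ≤ _ := norm_add_le _ _
      _ ≤ N * (Q * Λ * T₀ ^ 2) + Q * Λ * T₀ ^ 2 :=
        add_le_add (ih (hg.mono (Icc_subset_Icc_right hNT₀.2))) hperiod
      _ = (N + 1) * (Q * Λ * T₀ ^ 2) := by ring

theorem Function.Periodic.norm_integral_smul_le {q : ℝ → ℝ} {g : ℝ → E} {T₀ Q B s : ℝ}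
    {Λ : NNReal} (hq : Periodic q T₀) (hT₀ : 0 < T₀) (hqi : IntervalIntegrable q volume 0 T₀)
    (hq0 : ∫ u in 0..T₀, q u = 0) (hQ : ∀ u, |q u| ≤ Q) (hs : 0 ≤ s)
    (hg : LipschitzOnWith Λ g (Icc 0 s)) (hB : ∀ u ∈ Icc 0 s, ‖g u‖ ≤ B) :
    ‖∫ u in 0..s, q u • g u‖ ≤ Q * (Λ * s + B) * T₀ := by
  have hQ0 : 0 ≤ Q := (abs_nonneg _).trans (hQ 0)
  have hB0 : 0 ≤ B := (norm_nonneg _).trans (hB 0 (left_mem_Icc.2 hs))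
  have hint : ∀ a ∈ Icc 0 s, ∀ b ∈ Icc 0 s, IntervalIntegrable (fun u => q u • g u) volume a b :=
    fun a ha b hb => (hq.intervalIntegrable₀ hT₀.ne' hqi a b).smul_continuousOn
      (hg.continuousOn.mono (uIcc_subset_Icc ha hb))
  set N := ⌊s / T₀⌋₊
  have hN : (N : ℝ) * T₀ ≤ s := (le_div_iff₀ hT₀).1 (Nat.floor_le (div_nonneg hs hT₀.le))
  have hN' : s - N * T₀ ≤ T₀ := by
    have := (div_lt_iff₀ hT₀).1 (Nat.lt_floor_add_one (s / T₀))
    linarith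
  have hNs : (N : ℝ) * T₀ ∈ Icc 0 s := ⟨by positivity, hN⟩
  have htail : ‖∫ u in N * T₀..s, q u • g u‖ ≤ Q * B * (s - N * T₀) := by
    rw [← abs_of_nonneg (sub_nonneg.2 hN)]
    refine intervalIntegral.norm_integral_le_of_norm_le_const fun u hu => ?_
    rw [uIoc_of_le hN] at hu
    rw [norm_smul, Real.norm_eq_abs]
    exact mul_le_mul (hQ u) (hB u ⟨hNs.1.trans hu.1.le, hu.2⟩) (norm_nonneg _) hQ0
  have hperiods := hq.norm_integral_nat_mul_smul_le hT₀ hqi hq0 hQ N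
    (hg.mono (Icc_subset_Icc_right hN))
  rw [← intervalIntegral.integral_add_adjacent_intervals (hint _ (left_mem_Icc.2 hs) _ hNs)
    (hint _ hNs _ (right_mem_Icc.2 hs))]
  calc _ ≤ _ := norm_add_le _ _
    _ ≤ N * (Q * Λ * T₀ ^ 2) + Q * B * (s - N * T₀) := add_le_add hperiods htail
    _ = Q * Λ * T₀ * (N * T₀) + Q * B * (s - N * T₀) := by ring
    _ ≤ Q * Λ * T₀ * s + Q * B * T₀ := by gcongr
    _ = Q * (Λ * s + B) * T₀ := by ring

theorem Function.Periodic.norm_integral_mean_sub_smul_le {p : ℝ → ℝ} {g : ℝ → E}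
    {T₀ M B s pstar : ℝ} {Λ : NNReal} (hp : Periodic p T₀) (hT₀ : 0 < T₀) (hpm : Measurable p)
    (hpM : ∀ u, |p u| ≤ M) (hmean : 1 / T₀ * ∫ u in 0..T₀, p u = pstar) (hs : 0 ≤ s)
    (hg : LipschitzOnWith Λ g (Icc 0 s)) (hB : ∀ u ∈ Icc 0 s, ‖g u‖ ≤ B) :
    ‖∫ u in 0..s, (pstar - p u) • g u‖ ≤ 2 * M * (Λ * s + B) * T₀ := by
  have hpi := hpm.intervalIntegrable_of_abs_le hpM 0 T₀
  refine Periodic.norm_integral_smul_le (fun u => by simp only [hp u]) hT₀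
    (intervalIntegrable_const.sub hpi) ?_ (fun u => ?_) hs hg hB
  · rw [intervalIntegral.integral_sub intervalIntegrable_const hpi,
      intervalIntegral.integral_const, smul_eq_mul, sub_zero, ← hmean]
    field_simp
    ring
  · linarith [abs_sub pstar (p u), hpM u, hmean ▸ abs_one_div_mul_integral_le hT₀ hpM]

theorem norm_integral_mean_sub_smul_le_of_hasDerivAt {F : E → E} {A : E →L[ℝ] E} {y : ℝ → E}
    {p : ℝ → ℝ} {K c T T₀ M pstar : ℝ} (hK : 0 ≤ K) (hc : 0 ≤ c)
    (hF : ∀ v, ‖F v‖ ≤ K * ‖v‖ + c) (hy : ∀ t ∈ Icc 0 T, HasDerivAt y (F (y t)) t)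
    (hp : Periodic p T₀) (hT₀ : 0 < T₀) (hpm : Measurable p) (hpM : ∀ u, |p u| ≤ M)
    (hmean : 1 / T₀ * ∫ u in 0..T₀, p u = pstar) :
    ∀ s ∈ Icc 0 T, ‖∫ u in 0..s, (pstar - p u) • A (y u)‖ ≤
      2 * M * ‖A‖ * ((K * gronwallBound ‖y 0‖ K c T + c) * T + gronwallBound ‖y 0‖ K c T) * T₀ := by
  intro s hs
  set R := gronwallBound ‖y 0‖ K c T
  set V := K * R + c
  have hyR := norm_le_gronwallBound_of_hasDerivAt hK hc hF hy
  have hR : 0 ≤ R := (norm_nonneg _).trans (hyR 0 ⟨le_rfl, hs.1.trans hs.2⟩)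
  have hV : 0 ≤ V := by positivity
  have hM : 0 ≤ M := (abs_nonneg _).trans (hpM 0)
  have hAyR : ∀ u ∈ Icc 0 s, ‖A (y u)‖ ≤ ‖A‖ * R := fun u hu =>
    (A.le_opNorm _).trans (by gcongr; exact hyR u ⟨hu.1, hu.2.trans hs.2⟩)
  refine (hp.norm_integral_mean_sub_smul_le hT₀ hpm hpM hmean hs.1
    ((A.lipschitz.comp_lipschitzOnWith (lipschitzOnWith_of_hasDerivAt hK hc hF hy)).mono
      (Icc_subset_Icc_right hs.2)) hAyR).trans ?_
  rw [NNReal.coe_mul, coe_nnnorm, Real.coe_toNNReal _ hV]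
  calc 2 * M * (‖A‖ * V * s + ‖A‖ * R) * T₀ = 2 * M * ‖A‖ * (V * s + R) * T₀ := by ring
    _ ≤ 2 * M * ‖A‖ * (V * T + R) * T₀ := by gcongr; exact hs.2

end

theorem ps_switched_vs_averaged_quantitative_general
    {n : ℕ} (f : EuclideanSpace ℝ (Fin n) → EuclideanSpace ℝ (Fin n))
    (L : ℝ) (hf : LipschitzWith L.toNNReal f)
    (A : EuclideanSpace ℝ (Fin n) →ₗ[ℝ] EuclideanSpace ℝ (Fin n))
    (x₀ : EuclideanSpace ℝ (Fin n)) (T M : ℝ) (hT : 0 < T) (hM : 0 < M) :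
    ∃ C > 0, ∀ T₀ : ℝ, T₀ ∈ Set.Ioc (0 : ℝ) 1 →
      ∀ p : ℝ → ℝ, Measurable p →
        (∀ t : ℝ, p (t + T₀) = p t) →
        (∀ t : ℝ, |p t| ≤ M) →
        ∀ pstar : ℝ, (1 / T₀) * (∫ u in (0 : ℝ)..T₀, p u) = pstar →
        ∀ x y : ℝ → EuclideanSpace ℝ (Fin n),
          x 0 = x₀ →
          (∀ t ∈ Set.Icc (0 : ℝ) T, HasDerivAt x (f (x t) + p t • A (x t)) t) →
          y 0 = x₀ →
          (∀ t ∈ Set.Icc (0 : ℝ) T, HasDerivAt y (f (y t) + pstar • A (y t)) t) →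
          ∀ t ∈ Set.Icc (0 : ℝ) T, ‖x t - y t‖ ≤ C * T₀ := by
  set Ac := LinearMap.toContinuousLinearMap A
  set K := L.toNNReal + M * ‖Ac‖
  set R := gronwallBound ‖x₀‖ K ‖f 0‖ T
  set C₁ := 2 * M * ‖Ac‖ * ((K * R + ‖f 0‖) * T + R)
  have hK : 0 ≤ K := by positivity
  have hR : 0 ≤ R := (norm_nonneg x₀).trans <| gronwallBound_x0 ‖x₀‖ K ‖f 0‖ ▸
    gronwallBound_mono (norm_nonneg x₀) (norm_nonneg _) hK hT.le
  have hC₁ : 0 ≤ C₁ := by positivity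
  refine ⟨(C₁ + 1) * exp (K * T), by positivity, ?_⟩
  rintro T₀ ⟨hT₀, -⟩ p hp hper hpM pstar hmean x y hx0 hx hy0 hy t ht
  have hpi := hp.intervalIntegrable_of_abs_le hpM 0 T
  have hAc : ∀ z, ContinuousOn z (Icc 0 T) → ContinuousOn (fun s => Ac (z s)) (uIcc 0 T) :=
    fun z hz => uIcc_of_le hT.le ▸ Ac.continuous.comp_continuousOn hz
  have hosc : ∀ s ∈ Icc 0 T, ‖∫ u in 0..s, (pstar - p u) • Ac (y u)‖ ≤ C₁ * T₀ := by
    simpa only [hy0] using norm_integral_mean_sub_smul_le_of_hasDerivAt hK (norm_nonneg _)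
      (hf.norm_add_smul_le Ac (hmean ▸ abs_one_div_mul_integral_le hT₀ hpM)) hy hper hT₀ hp hpM
      hmean
  have hxy := norm_sub_le_mul_exp_of_integral_perturbation (G := fun s v => f v + p s • Ac v)
    (r := fun s => (pstar - p s) • Ac (y s)) hK
    (fun s _ => hf.norm_add_smul_sub_add_smul_le Ac (hpM s))
    (fun z hz => ((hf.continuous.comp_continuousOn hz).intervalIntegrable_of_Icc hT.le).add
      (hpi.smul_continuousOn (hAc z hz)))
    hx (fun s hs => (hy s hs).congr_deriv (by rw [sub_smul]; abel)) (hx0.trans hy0.symm)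
    ((intervalIntegrable_const.sub hpi).smul_continuousOn
      (hAc y fun s hs => (hy s hs).continuousAt.continuousWithinAt))
    hosc t ht
  calc ‖x t - y t‖ ≤ C₁ * T₀ * exp (K * t) := hxy
    _ ≤ (C₁ + 1) * exp (K * T) * T₀ := by
      rw [mul_right_comm]
      gcongr
      · linarith
      · exact ht.2

/-- Quantitative averaging theorem for the parameter-switching (PS) algorithm.
For `f` Lipschitz, `A` linear, there is a constant `C > 0` (depending only on
`f, A, x₀, T, M`) such that every solution of the switched system with a measurable,
bounded, `T₀`-periodic switching function of mean `p*` stays within `C·T₀` of every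
solution of the averaged system on `[0, T]`. -/
theorem ps_switched_vs_averaged_quantitative
    {n : ℕ} (f : EuclideanSpace ℝ (Fin n) → EuclideanSpace ℝ (Fin n))
    (L : ℝ) (hL : 0 ≤ L) (hf : LipschitzWith L.toNNReal f)
    (A : EuclideanSpace ℝ (Fin n) →ₗ[ℝ] EuclideanSpace ℝ (Fin n))
    (x₀ : EuclideanSpace ℝ (Fin n)) (T M : ℝ) (hT : 0 < T) (hM : 0 < M) :
    ∃ C > 0, ∀ T₀ : ℝ, T₀ ∈ Set.Ioc (0 : ℝ) 1 →
      ∀ p : ℝ → ℝ, Measurable p →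
        (∀ t : ℝ, p (t + T₀) = p t) →
        (∀ t : ℝ, |p t| ≤ M) →
        ∀ pstar : ℝ, (1 / T₀) * (∫ u in (0 : ℝ)..T₀, p u) = pstar →
        ∀ x y : ℝ → EuclideanSpace ℝ (Fin n),
          x 0 = x₀ →
          (∀ t ∈ Set.Icc (0 : ℝ) T, HasDerivAt x (f (x t) + p t • A (x t)) t) →
          y 0 = x₀ →
          (∀ t ∈ Set.Icc (0 : ℝ) T, HasDerivAt y (f (y t) + pstar • A (y t)) t) →
          ∀ t ∈ Set.Icc (0 : ℝ) T, ‖x t - y t‖ ≤ C * T₀ :=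
  ps_switched_vs_averaged_quantitative_general f L hf A x₀ T M hT hM
end

section
/- Let f : ℝⁿ → ℝⁿ be Lipschitz, A : ℝⁿ → ℝⁿ a linear map, x₀ ∈ ℝⁿ, T > 0, and fix real values p₁,…,p_N and positive integers m₁,…,m_N with average p* = (Σ_{k=1}^N m_k p_k)/(Σ_{k=1}^N m_k). For each step size h > 0 let p_h : ℝ → ℝ be the PS switching function determined by the scheme [m₁p₁,…,m_N p_N] with step h. Then for every ε > 0 there exists δ > 0 such that for every h ∈ (0,δ), every solution x_h of the switched system with parameter function p_h on [0,T] and every solution y of the averaged system with constant parameter p* on [0,T] satisfy sup_{t ∈ [0,T]} ‖x_h(t) − y(t)‖ ≤ ε. -/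
/-- `IsPSSwitch h N pv m p` : `p : ℝ → ℝ` is the PS switching function determined by the
scheme `[m₁p₁, …, m_N p_N]` with step size `h` (indices `0, …, N-1` here): it is
`T₀`-periodic with `T₀ = h · (m₀ + ⋯ + m_{N-1})`, and within each period it equals
`pv k` on the interval `[h·s_k, h·s_{k+1})`, where `s_k = m₀ + ⋯ + m_{k-1}`. -/
def IsPSSwitch (h : ℝ) (N : ℕ) (pv : ℕ → ℝ) (m : ℕ → ℕ) (p : ℝ → ℝ) : Prop :=
  (∀ t : ℝ, p (t + h * (∑ i ∈ Finset.range N, (m i : ℝ))) = p t) ∧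
  ∀ k < N, ∀ t : ℝ,
    h * (∑ i ∈ Finset.range k, (m i : ℝ)) ≤ t →
    t < h * (∑ i ∈ Finset.range (k + 1), (m i : ℝ)) →
    p t = pv k

/-!
Let `Q t = ∫₀ᵗ (p_h - p*)`. Since `p_h` is periodic with period `T₀ = h Σ mₖ` and has mean `p*`
over a period, `Q` vanishes at every multiple of `T₀`, hence `|Q| = O(h)`. The near-identity
transform `z = y + Q • A y` of the averaged solution then solves the switched equation up to a
defect of order `h`, and Grönwall's inequality gives `‖x - z‖ = O(h)` on `[0, T]`. The constants
depend on `y` only through an a priori bound, again from Grönwall, that holds for every solution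
of the averaged equation starting at `x₀`.
-/

open Set Filter Topology MeasureTheory NNReal

theorem exists_mem_Ico_of_le_of_lt {α : Type*} [LinearOrder α] {a : ℕ → α} {u : α} :
    ∀ {N : ℕ}, a 0 ≤ u → u < a N → ∃ k < N, u ∈ Ico (a k) (a (k + 1))
  | 0, h0, hN => absurd (h0.trans_lt hN) (lt_irrefl _)
  | N + 1, h0, hN => by
    by_cases hu : u < a N
    · obtain ⟨k, hk, hmem⟩ := exists_mem_Ico_of_le_of_lt h0 hu
      exact ⟨k, by omega, hmem⟩
    · exact ⟨N, by omega, not_lt.1 hu, hN⟩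

/-- A right-continuous function is the pointwise limit of the functions `x ↦ f (⌈n x⌉ / n)`,
which factor through the discrete space `ℤ`. -/
theorem measurable_of_continuousWithinAt_Ici {β : Type*} [TopologicalSpace β]
    [TopologicalSpace.PseudoMetrizableSpace β] [MeasurableSpace β] [BorelSpace β] {f : ℝ → β}
    (hf : ∀ x, ContinuousWithinAt f (Ici x) x) : Measurable f := by
  set u : ℕ → ℝ → ℝ := fun n x => ⌈(n + 1 : ℝ) * x⌉ / (n + 1)
  have hlo : ∀ n x, x ≤ u n x := fun n x => by
    rw [le_div_iff₀ (by positivity), mul_comm]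
    exact Int.le_ceil _
  have hhi : ∀ n x, u n x ≤ x + 1 / (n + 1) := fun n x => by
    rw [div_le_iff₀ (by positivity)]
    calc (⌈(n + 1 : ℝ) * x⌉ : ℝ) ≤ (n + 1) * x + 1 := (Int.ceil_lt_add_one _).le
      _ = (x + 1 / (n + 1)) * (n + 1) := by field_simp
  have hu : ∀ x, Tendsto (fun n => u n x) atTop (𝓝[≥] x) := fun x => by
    refine tendsto_nhdsWithin_iff.2 ⟨?_, Eventually.of_forall fun n => hlo n x⟩
    refine tendsto_of_tendsto_of_tendsto_of_le_of_le tendsto_const_nhds ?_ (hlo · x) (hhi · x)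
    simpa using tendsto_one_div_add_atTop_nhds_zero_nat.const_add x
  refine measurable_of_tendsto_metrizable (f := fun n x => f (u n x)) (fun n => ?_)
    (tendsto_pi_nhds.2 fun x => (hf x).tendsto.comp (hu x))
  exact (Measurable.of_discrete (f := fun z : ℤ => f (z / (n + 1)))).comp
    (measurable_id.const_mul _).ceil

theorem Function.Periodic.norm_intervalIntegral_le {E : Type*} [NormedAddCommGroup E]
    [NormedSpace ℝ E] {g : ℝ → E} {c B : ℝ} (hg : Function.Periodic g c) (hc : 0 < c)
    (hint : ∀ a b, IntervalIntegrable g volume a b) (hmean : ∫ s in 0..c, g s = 0)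
    (hB : ∀ s, ‖g s‖ ≤ B) (t : ℝ) : ‖∫ s in 0..t, g s‖ ≤ B * c := by
  set r := Int.fract (t / c) * c
  obtain ⟨hr0, hrc⟩ : r ∈ Ico 0 c := Int.fract_div_mul_self_mem_Ico c t hc
  have hperiods : ∫ s in r..r + ⌊t / c⌋ • c, g s = 0 := by
    rw [hg.intervalIntegral_add_zsmul_eq _ _ hint, hg.intervalIntegral_add_eq r 0, zero_add,
      hmean, smul_zero]
  rw [← Int.fract_div_mul_self_add_zsmul_eq c t hc.ne',
    ← intervalIntegral.integral_add_adjacent_intervals (hint 0 r) (hint _ _), hperiods, add_zero]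
  calc ‖∫ s in 0..r, g s‖ ≤ B * |r - 0| :=
        intervalIntegral.norm_integral_le_of_norm_le_const fun s _ => hB s
    _ ≤ B * c := by
        rw [sub_zero, abs_of_nonneg hr0]
        exact mul_le_mul_of_nonneg_left hrc.le ((norm_nonneg _).trans (hB 0))

theorem gronwallBound_zero_mul (K η ε x : ℝ) :
    gronwallBound 0 K (η * ε) x = η * gronwallBound 0 K ε x := by
  unfold gronwallBound
  split_ifs <;> ring

theorem LipschitzWith.norm_le_mul_add {E F : Type*} [SeminormedAddCommGroup E]
    [SeminormedAddCommGroup F] {G : E → F} {K : ℝ≥0} (hG : LipschitzWith K G) (z : E) :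
    ‖G z‖ ≤ K * ‖z‖ + ‖G 0‖ := by
  have := hG.dist_le_mul z 0
  rw [dist_eq_norm, dist_zero_right] at this
  linarith [norm_le_norm_add_norm_sub' (G z) (G 0)]

section Averaging

variable {E : Type*} [NormedAddCommGroup E] [NormedSpace ℝ E]

theorem lipschitzWith_add_smul {F : E → E} {L P : ℝ≥0} (hF : LipschitzWith L F)
    (A : E →L[ℝ] E) {c : ℝ} (hc : ‖c‖₊ ≤ P) :
    LipschitzWith (L + P * ‖A‖₊) fun z => F z + c • A z :=
  hF.add <| (c • A).lipschitz.weaken <| (nnnorm_smul_le c A).trans (by gcongr)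

theorem norm_le_gronwallBound_of_hasDerivAt_s2 {G : E → E} {K : ℝ≥0} (hG : LipschitzWith K G)
    {y : ℝ → E} {T : ℝ} (hy : ∀ t ∈ Icc 0 T, HasDerivAt y (G (y t)) t) {t : ℝ}
    (ht : t ∈ Icc 0 T) : ‖y t‖ ≤ gronwallBound ‖y 0‖ K ‖G 0‖ T := by
  have hbound := norm_le_gronwallBound_of_norm_deriv_right_le
    (fun s hs => (hy s hs).continuousAt.continuousWithinAt)
    (fun s hs => (hy s (Ico_subset_Icc_self hs)).hasDerivWithinAt) le_rfl
    (fun s _ => hG.norm_le_mul_add (y s)) t ht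
  rw [sub_zero] at hbound
  exact hbound.trans (gronwallBound_mono (norm_nonneg _) (norm_nonneg _) K.2 ht.2)

theorem norm_apply_le_of_hasDerivAt {G : E → E} {K : ℝ≥0} (hG : LipschitzWith K G)
    {y : ℝ → E} {T : ℝ} (hy : ∀ t ∈ Icc 0 T, HasDerivAt y (G (y t)) t) {t : ℝ}
    (ht : t ∈ Icc 0 T) : ‖G (y t)‖ ≤ K * gronwallBound ‖y 0‖ K ‖G 0‖ T + ‖G 0‖ :=
  (hG.norm_le_mul_add _).trans <| by grw [norm_le_gronwallBound_of_hasDerivAt_s2 hG hy ht]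

theorem dist_nearIdentity_deriv_le {F : E → E} {K : ℝ≥0} (A : E →L[ℝ] E) {c : ℝ}
    (hv : LipschitzWith K fun z => F z + c • A z) (pstar q : ℝ) (y : E) :
    dist (F y + pstar • A y + (q • A (F y + pstar • A y) + (c - pstar) • A y))
        (F (y + q • A y) + c • A (y + q • A y)) ≤
      |q| * (K * ‖A y‖ + ‖A (F y + pstar • A y)‖) := by
  set w := F y + pstar • A y
  set v := fun z => F z + c • A z
  have hlip : ‖v y - v (y + q • A y)‖ ≤ K * (|q| * ‖A y‖) := by
    simpa [dist_eq_norm, norm_smul] using hv.dist_le_mul y (y + q • A y)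
  calc dist (w + (q • A w + (c - pstar) • A y)) (v (y + q • A y))
        = ‖(v y - v (y + q • A y)) + q • A w‖ := by
        rw [dist_eq_norm]; congr 1; simp only [v, w, sub_smul]; abel
    _ ≤ K * (|q| * ‖A y‖) + |q| * ‖A w‖ := by
        grw [norm_add_le, hlip, norm_smul, Real.norm_eq_abs]
    _ = |q| * (K * ‖A y‖ + ‖A w‖) := by ring

theorem norm_sub_le_of_abs_primitive_le {F : E → E} {K : ℝ≥0} (A : E →L[ℝ] E)
    {p Q : ℝ → ℝ} {pstar η M M' T : ℝ} (hv : ∀ t, LipschitzWith K fun z => F z + p t • A z)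
    (hQc : ContinuousOn Q (Icc 0 T))
    (hQ' : ∀ t ∈ Ico 0 T, HasDerivWithinAt Q (p t - pstar) (Ici t) t) (hQ0 : Q 0 = 0)
    (hQη : ∀ t ∈ Icc 0 T, |Q t| ≤ η) {x y : ℝ → E} (hxy : x 0 = y 0)
    (hx : ∀ t ∈ Icc 0 T, HasDerivAt x (F (x t) + p t • A (x t)) t)
    (hy : ∀ t ∈ Icc 0 T, HasDerivAt y (F (y t) + pstar • A (y t)) t)
    (hyM : ∀ t ∈ Icc 0 T, ‖y t‖ ≤ M) (hy'M : ∀ t ∈ Icc 0 T, ‖F (y t) + pstar • A (y t)‖ ≤ M')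
    {t : ℝ} (ht : t ∈ Icc 0 T) :
    ‖x t - y t‖ ≤ η * (‖A‖ * M + gronwallBound 0 K (‖A‖ * (K * M + M')) T) := by
  set y' := fun s => F (y s) + pstar • A (y s)
  set z := fun s => y s + Q s • A (y s)
  have hη : 0 ≤ η := (abs_nonneg _).trans (hQη t ht)
  have hM : 0 ≤ M := (norm_nonneg _).trans (hyM t ht)
  have hM' : 0 ≤ M' := (norm_nonneg _).trans (hy'M t ht)
  have hyc : ContinuousOn y (Icc 0 T) := fun s hs => (hy s hs).continuousAt.continuousWithinAt
  have hz' : ∀ s ∈ Ico 0 T, HasDerivWithinAt z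
      (y' s + (Q s • A (y' s) + (p s - pstar) • A (y s))) (Ici s) s := by
    intro s hs
    have hys := (hy s (Ico_subset_Icc_self hs)).hasDerivWithinAt (s := Ici s)
    exact hys.add ((hQ' s hs).smul (A.hasFDerivAt.comp_hasDerivWithinAt s hys))
  have hz_defect : ∀ s ∈ Ico 0 T, dist (y' s + (Q s • A (y' s) + (p s - pstar) • A (y s)))
      (F (z s) + p s • A (z s)) ≤ η * (‖A‖ * (K * M + M')) := by
    intro s hs
    have hsI := Ico_subset_Icc_self hs
    calc _ ≤ |Q s| * (K * ‖A (y s)‖ + ‖A (y' s)‖) := dist_nearIdentity_deriv_le A (hv s) _ _ _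
      _ ≤ η * (K * (‖A‖ * M) + ‖A‖ * M') := by
          gcongr
          · exact hQη s hsI
          · exact A.le_opNorm_of_le (hyM s hsI)
          · exact A.le_opNorm_of_le (hy'M s hsI)
      _ = η * (‖A‖ * (K * M + M')) := by ring
  have hxz := dist_le_of_approx_trajectories_ODE (εf := 0) (δ := 0) hv
    (fun s hs => (hx s hs).continuousAt.continuousWithinAt)
    (fun s hs => (hx s (Ico_subset_Icc_self hs)).hasDerivWithinAt) (fun s _ => by rw [dist_self])
    (hyc.add (hQc.smul (A.continuous.comp_continuousOn hyc)))
    hz' hz_defect (by simp [hQ0, hxy]) t ht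
  rw [zero_add, sub_zero, gronwallBound_zero_mul] at hxz
  have hgronwall_mono :=
    gronwallBound_mono le_rfl (by positivity) K.2 ht.2 (ε := ‖A‖ * (K * M + M'))
  calc ‖x t - y t‖ = ‖(x t - z t) + Q t • A (y t)‖ := by simp only [z]; abel_nf
    _ ≤ dist (x t) (z t) + |Q t| * ‖A (y t)‖ := by
        rw [dist_eq_norm, ← Real.norm_eq_abs, ← norm_smul]; exact norm_add_le _ _
    _ ≤ η * gronwallBound 0 K (‖A‖ * (K * M + M')) T + η * (‖A‖ * M) := by
        gcongr
        · exact hxz.trans (mul_le_mul_of_nonneg_left hgronwall_mono hη)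
        · exact hQη t ht
        · exact A.le_opNorm_of_le (hyM t ht)
    _ = η * (‖A‖ * M + gronwallBound 0 K (‖A‖ * (K * M + M')) T) := by ring

end Averaging

theorem sum_range_cast_pos {N : ℕ} {m : ℕ → ℕ} (hN : 0 < N) (hm : ∀ k < N, 0 < m k) :
    0 < ∑ i ∈ Finset.range N, (m i : ℝ) :=
  Finset.sum_pos (fun i hi => Nat.cast_pos.2 (hm i (Finset.mem_range.1 hi))) ⟨0, by simpa⟩

namespace IsPSSwitch

variable {h : ℝ} {N : ℕ} {pv : ℕ → ℝ} {m : ℕ → ℕ} {ph : ℝ → ℝ}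

theorem periodic (hps : IsPSSwitch h N pv m ph) :
    Function.Periodic ph (h * ∑ i ∈ Finset.range N, (m i : ℝ)) :=
  hps.1

variable (hps : IsPSSwitch h N pv m ph) (hh : 0 < h) (hN : 0 < N) (hm : ∀ k < N, 0 < m k)
include hps hh hN hm

theorem eventually_eq_nhdsGE (t : ℝ) : ∃ k < N, ∀ᶠ w in 𝓝[≥] t, ph w = pv k := by
  set a : ℕ → ℝ := fun k => h * ∑ i ∈ Finset.range k, (m i : ℝ)
  have hc : 0 < a N := mul_pos hh (sum_range_cast_pos hN hm)
  set n := ⌊t / a N⌋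
  obtain ⟨k, hk, hlo, hhi⟩ := exists_mem_Ico_of_le_of_lt (a := a) (u := t - n * a N)
    (by simpa [a] using Int.sub_floor_div_mul_nonneg t hc) (Int.sub_floor_div_mul_lt t hc)
  refine ⟨k, hk, eventually_of_mem (Ico_mem_nhdsGE (a := t + (a (k + 1) - (t - n * a N)))
    (by linarith)) fun w hw => ?_⟩
  rw [← hps.periodic.sub_int_mul_eq n]
  exact hps.2 k hk _ (by linarith [hw.1]) (by linarith [hw.2])

theorem exists_eq (t : ℝ) : ∃ k < N, ph t = pv k :=
  let ⟨k, hk, hev⟩ := hps.eventually_eq_nhdsGE hh hN hm t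
  ⟨k, hk, hev.self_of_nhdsWithin self_mem_Ici⟩

theorem nnnorm_le (t : ℝ) : ‖ph t‖₊ ≤ ∑ k ∈ Finset.range N, ‖pv k‖₊ := by
  obtain ⟨k, hk, hkt⟩ := hps.exists_eq hh hN hm t
  rw [hkt]
  exact Finset.single_le_sum (f := fun k => ‖pv k‖₊) (fun _ _ => by positivity)
    (Finset.mem_range.2 hk)

theorem norm_le (t : ℝ) : ‖ph t‖ ≤ ∑ k ∈ Finset.range N, ‖pv k‖ := by
  simpa [← NNReal.coe_le_coe] using hps.nnnorm_le hh hN hm t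

theorem continuousWithinAt_Ici (t : ℝ) : ContinuousWithinAt ph (Ici t) t := by
  obtain ⟨k, -, hev⟩ := hps.eventually_eq_nhdsGE hh hN hm t
  exact continuousWithinAt_const.congr_of_eventuallyEq hev (hev.self_of_nhdsWithin self_mem_Ici)

theorem measurable : Measurable ph :=
  measurable_of_continuousWithinAt_Ici (hps.continuousWithinAt_Ici hh hN hm)

theorem intervalIntegrable (a b : ℝ) : IntervalIntegrable ph volume a b :=
  (intervalIntegrable_const (c := ∑ k ∈ Finset.range N, ‖pv k‖)).mono_fun
    (hps.measurable hh hN hm).aestronglyMeasurable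
    (Eventually.of_forall fun t => (hps.norm_le hh hN hm t).trans (le_abs_self _))

theorem integral_period :
    ∫ t in 0..h * ∑ i ∈ Finset.range N, (m i : ℝ), ph t =
      h * ∑ k ∈ Finset.range N, (m k : ℝ) * pv k := by
  set a : ℕ → ℝ := fun k => h * ∑ i ∈ Finset.range k, (m i : ℝ)
  have hpiece : ∀ k < N, ∫ t in a k..a (k + 1), ph t = h * ((m k : ℝ) * pv k) := by
    intro k hk
    have hak : a (k + 1) - a k = h * m k := by simp only [a, Finset.sum_range_succ]; ring
    have hle : a k ≤ a (k + 1) := by nlinarith [hak, (Nat.cast_nonneg (m k) : (0:ℝ) ≤ m k)]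
    rw [intervalIntegral.integral_of_le hle, ← integral_Ico_eq_integral_Ioc,
      setIntegral_congr_fun measurableSet_Ico fun t ht => hps.2 k hk t ht.1 ht.2,
      setIntegral_const, Real.volume_real_Ico_of_le hle, hak, smul_eq_mul]
    ring
  have hsum := intervalIntegral.sum_integral_adjacent_intervals (μ := volume) (a := a) (n := N)
    fun k _ => hps.intervalIntegrable hh hN hm _ _
  simp only [a, Finset.sum_range_zero, mul_zero] at hsum
  rw [← hsum, Finset.mul_sum]
  exact Finset.sum_congr rfl fun k hk => hpiece k (Finset.mem_range.1 hk)

theorem continuous_primitive_sub (pstar : ℝ) :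
    Continuous fun t => ∫ s in 0..t, (ph s - pstar) :=
  intervalIntegral.continuous_primitive
    (fun a b => (hps.intervalIntegrable hh hN hm a b).sub intervalIntegrable_const) 0

theorem hasDerivWithinAt_primitive_sub (pstar t : ℝ) :
    HasDerivWithinAt (fun u => ∫ s in 0..u, (ph s - pstar)) (ph t - pstar) (Ici t) t :=
  intervalIntegral.integral_hasDerivWithinAt_right
    ((hps.intervalIntegrable hh hN hm 0 t).sub intervalIntegrable_const)
    ((hps.measurable hh hN hm).sub measurable_const).stronglyMeasurable.stronglyMeasurableAtFilter
    (((hps.continuousWithinAt_Ici hh hN hm t).sub continuousWithinAt_const).mono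
      Ioi_subset_Ici_self)

theorem integral_period_sub_average {pstar : ℝ}
    (hpstar : pstar =
      (∑ k ∈ Finset.range N, (m k : ℝ) * pv k) / ∑ k ∈ Finset.range N, (m k : ℝ)) :
    ∫ t in 0..h * ∑ i ∈ Finset.range N, (m i : ℝ), (ph t - pstar) = 0 := by
  have hS := (sum_range_cast_pos hN hm).ne'
  rw [intervalIntegral.integral_sub (hps.intervalIntegrable hh hN hm _ _)
    intervalIntegrable_const, hps.integral_period hh hN hm, intervalIntegral.integral_const,
    hpstar, smul_eq_mul]
  field_simp
  ring

theorem abs_integral_sub_average_le {pstar : ℝ}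
    (hpstar : pstar =
      (∑ k ∈ Finset.range N, (m k : ℝ) * pv k) / ∑ k ∈ Finset.range N, (m k : ℝ))
    (t : ℝ) :
    |∫ s in 0..t, (ph s - pstar)| ≤
      (∑ k ∈ Finset.range N, ‖pv k‖ + |pstar|) * (h * ∑ i ∈ Finset.range N, (m i : ℝ)) :=
  Function.Periodic.norm_intervalIntegral_le (fun s => congrArg (· - pstar) (hps.periodic s))
    (mul_pos hh (sum_range_cast_pos hN hm))
    (fun a b => (hps.intervalIntegrable hh hN hm a b).sub intervalIntegrable_const)
    (hps.integral_period_sub_average hh hN hm hpstar)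
    (fun s => (norm_sub_le _ _).trans (add_le_add (hps.norm_le hh hN hm s) le_rfl)) t

end IsPSSwitch

theorem ps_algorithm_converges_general
    {n : ℕ} (f : EuclideanSpace ℝ (Fin n) → EuclideanSpace ℝ (Fin n))
    (L : ℝ) (hf : LipschitzWith L.toNNReal f)
    (A : EuclideanSpace ℝ (Fin n) →ₗ[ℝ] EuclideanSpace ℝ (Fin n))
    (x₀ : EuclideanSpace ℝ (Fin n)) (T : ℝ)
    (N : ℕ) (hN : 0 < N) (pv : ℕ → ℝ) (m : ℕ → ℕ) (hm : ∀ k < N, 0 < m k)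
    (pstar : ℝ)
    (hpstar : pstar =
      (∑ k ∈ Finset.range N, (m k : ℝ) * pv k) / (∑ k ∈ Finset.range N, (m k : ℝ))) :
    ∀ ε > 0, ∃ δ > 0, ∀ h : ℝ, 0 < h → h < δ →
      ∀ ph : ℝ → ℝ, IsPSSwitch h N pv m ph →
      ∀ x y : ℝ → EuclideanSpace ℝ (Fin n),
        x 0 = x₀ →
        (∀ t ∈ Set.Icc (0 : ℝ) T, HasDerivAt x (f (x t) + ph t • A (x t)) t) →
        y 0 = x₀ →
        (∀ t ∈ Set.Icc (0 : ℝ) T, HasDerivAt y (f (y t) + pstar • A (y t)) t) →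
        ∀ t ∈ Set.Icc (0 : ℝ) T, ‖x t - y t‖ ≤ ε := by
  intro ε hε
  set A' := LinearMap.toContinuousLinearMap A
  set G := fun z => f z + pstar • A' z
  set K := L.toNNReal + (∑ k ∈ Finset.range N, ‖pv k‖₊) * ‖A'‖₊
  set K₀ := L.toNNReal + ‖pstar‖₊ * ‖A'‖₊
  -- `M` bounds every averaged solution from `x₀` on `[0, T]`; `h * C` is the final error bound.
  set M := gronwallBound ‖x₀‖ K₀ ‖G 0‖ T
  set C := (∑ k ∈ Finset.range N, ‖pv k‖ + |pstar|) * (∑ i ∈ Finset.range N, (m i : ℝ)) *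
    (‖A'‖ * M + gronwallBound 0 K (‖A'‖ * (K * M + (K₀ * M + ‖G 0‖))) T)
  refine ⟨ε / (|C| + 1), by positivity, fun h hh hδ ph hps x y hx0 hx hy0 hy t ht => ?_⟩
  have hG : LipschitzWith K₀ G := lipschitzWith_add_smul hf A' le_rfl
  have hclose := norm_sub_le_of_abs_primitive_le A'
    (fun s => lipschitzWith_add_smul hf A' (hps.nnnorm_le hh hN hm s))
    (hps.continuous_primitive_sub hh hN hm pstar).continuousOn
    (fun s _ => hps.hasDerivWithinAt_primitive_sub hh hN hm pstar s)
    intervalIntegral.integral_same (fun s _ => hps.abs_integral_sub_average_le hh hN hm hpstar s)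
    (hx0.trans hy0.symm) hx hy
    (fun s hs => hy0 ▸ norm_le_gronwallBound_of_hasDerivAt_s2 hG hy hs)
    (fun s hs => hy0 ▸ norm_apply_le_of_hasDerivAt hG hy hs) ht
  calc ‖x t - y t‖ ≤ h * C := hclose.trans_eq (by ring)
    _ ≤ h * (|C| + 1) := by gcongr; linarith [le_abs_self C]
    _ ≤ ε := ((lt_div_iff₀ (by positivity)).1 hδ).le

/-- the PS algorithm converges — for every `ε > 0` there is `δ > 0` such
that for every step size `h ∈ (0, δ)`, every solution of the system switched by the PS
scheme `[m₁p₁, …, m_N p_N]` stays within `ε` of every solution of the averaged system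
(with parameter `p* = (Σ m_k p_k)/(Σ m_k)`) uniformly on `[0, T]`. -/
theorem ps_algorithm_converges
    {n : ℕ} (f : EuclideanSpace ℝ (Fin n) → EuclideanSpace ℝ (Fin n))
    (L : ℝ) (hL : 0 ≤ L) (hf : LipschitzWith L.toNNReal f)
    (A : EuclideanSpace ℝ (Fin n) →ₗ[ℝ] EuclideanSpace ℝ (Fin n))
    (x₀ : EuclideanSpace ℝ (Fin n)) (T : ℝ) (hT : 0 < T)
    (N : ℕ) (hN : 0 < N) (pv : ℕ → ℝ) (m : ℕ → ℕ) (hm : ∀ k < N, 0 < m k)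
    (pstar : ℝ)
    (hpstar : pstar =
      (∑ k ∈ Finset.range N, (m k : ℝ) * pv k) / (∑ k ∈ Finset.range N, (m k : ℝ))) :
    ∀ ε > 0, ∃ δ > 0, ∀ h : ℝ, 0 < h → h < δ →
      ∀ ph : ℝ → ℝ, IsPSSwitch h N pv m ph →
      ∀ x y : ℝ → EuclideanSpace ℝ (Fin n),
        x 0 = x₀ →
        (∀ t ∈ Set.Icc (0 : ℝ) T, HasDerivAt x (f (x t) + ph t • A (x t)) t) →
        y 0 = x₀ →
        (∀ t ∈ Set.Icc (0 : ℝ) T, HasDerivAt y (f (y t) + pstar • A (y t)) t) →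
        ∀ t ∈ Set.Icc (0 : ℝ) T, ‖x t - y t‖ ≤ ε :=
  ps_algorithm_converges_general f L hf A x₀ T N hN pv m hm pstar hpstar
end
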